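/- arXiv:1305.2108 — 3 statements merged into one kernel-verified Lean document; each statement's English description precedes it below -/
import Mathlib

section
/- Let T be a tree decomposition of a graph G, let x and y be vertices of G, and let P = (x = p_0, p_1, ..., p_l = y) be a path from x to y in G. Let X and Y be bags of T containing x and y respectively. Then every bag on the unique path in T between X and Y contains at least one vertex p_i of P. -/
/-- A tree decomposition of a graph `G` on vertex set `V`, indexed by `I`. -/
structure TreeDecomp (V : Type) (G : SimpleGraph V) (I : Type) where
  T : SimpleGraph I
  isTree : T.IsTree
  bag : I → Set V
  covers : ∀ v : V, ∃ i, v ∈ bag i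
  edgeBag : ∀ ⦃v w : V⦄, G.Adj v w → ∃ i, v ∈ bag i ∧ w ∈ bag i
  sep : ∀ ⦃i j k : I⦄ (p : T.Walk i k), p.IsPath → j ∈ p.support →
    bag i ∩ bag k ⊆ bag j

/-! Induct on the walk `P = x, p₁, …, y`. If `P` is a single vertex, `x = y` lies in both end bags
and hence, by the separation axiom, in every bag on `Q`. Otherwise pick a bag `W` containing the
first edge `x p₁`. In a tree the path `Q` from `X` to `Y` is contained in any walk from `X` to `Y`,
in particular in the concatenation of the paths `X → W` and `W → Y`. A bag on the first of these
contains `x` (separation), and a bag on the second meets the rest of `P` by induction. -/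

theorem SimpleGraph.IsAcyclic.support_subset_of_isPath {V : Type*} {G : SimpleGraph V}
    (hG : G.IsAcyclic) {u v : V} {p : G.Walk u v} (hp : p.IsPath) (q : G.Walk u v) :
    p.support ⊆ q.support := by
  classical
  have hpq : p = q.bypass :=
    congrArg Subtype.val ((hG.subsingleton_path u v).elim ⟨p, hp⟩ ⟨q.bypass, q.bypass_isPath⟩)
  exact hpq ▸ q.support_bypass_subset_support

theorem bags_on_tree_path_meet_path_general {V I : Type} {G : SimpleGraph V}
    (td : TreeDecomp V G I) {x y : V} (P : G.Walk x y)
    (X Y : I) (hx : x ∈ td.bag X) (hy : y ∈ td.bag Y)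
    (Q : td.T.Walk X Y) (hQ : Q.IsPath) :
    ∀ J ∈ Q.support, ∃ v ∈ P.support, v ∈ td.bag J := by
  intro J hJ
  induction P generalizing X Q with
  | nil => exact ⟨_, SimpleGraph.Walk.start_mem_support _, td.sep Q hQ hJ ⟨hx, hy⟩⟩
  | cons hab P ih =>
    obtain ⟨W, haW, hbW⟩ := td.edgeBag hab
    obtain ⟨S, hS⟩ := (td.isTree.connected X W).exists_isPath
    obtain ⟨R, hR⟩ := (td.isTree.connected W Y).exists_isPath
    have hJSR := td.isTree.isAcyclic.support_subset_of_isPath hQ (S.append R) hJ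
    rcases (S.mem_support_append_iff R).1 hJSR with hJS | hJR
    · exact ⟨_, SimpleGraph.Walk.start_mem_support _, td.sep S hS hJS ⟨hx, haW⟩⟩
    · obtain ⟨v, hv, hvJ⟩ := ih W hbW hy R hR hJR
      exact ⟨v, SimpleGraph.Walk.support_subset_support_cons _ _ hv, hvJ⟩

/-- Every bag on the path in `T` between a bag containing `x` and a bag
containing `y` contains at least one vertex of any path `P` from `x` to `y` in `G`. -/
theorem bags_on_tree_path_meet_path {V I : Type} {G : SimpleGraph V}
    (td : TreeDecomp V G I) {x y : V} (P : G.Walk x y) (hP : P.IsPath)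
    (X Y : I) (hx : x ∈ td.bag X) (hy : y ∈ td.bag Y)
    (Q : td.T.Walk X Y) (hQ : Q.IsPath) :
    ∀ J ∈ Q.support, ∃ v ∈ P.support, v ∈ td.bag J :=
  bags_on_tree_path_meet_path_general td P X Y hx hy Q hQ
end

section
/- If a deterministic algorithm for binary string guessing with known history guesses correctly on more than α·m bits of every length-m input (1/2 ≤ α < 1) using b bits of advice, then 2^b · V ≥ 2^m, where V is the number of binary strings of length m within Hamming distance (1−α)m of a fixed string; consequently b ≥ m − log₂ V ≥ (1 + (1−α)log₂(1−α) + α log₂ α)·m. -/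
/-!
Fix for every input an advice string under which the algorithm errs at most
`k = ⌊(1 - α) m⌋` times. An input is recovered from its advice string and its set of
error positions: the guess at position `i` depends only on earlier bits, and knowing
whether that guess was right determines bit `i`. This injects the `2^m` inputs into
pairs (advice string, subset of size `≤ k`), so `2^m ≤ 2^b V`.

For the entropy bound put `p = 1 - α ≤ 1/2`. For `i ≤ p m` every term
`p^i (1-p)^(m-i)` of the binomial expansion of `(p + (1 - p))^m = 1` is at least
`p^(p m) (1-p)^((1-p) m)`, hence `V · p^(p m) (1-p)^((1-p) m) ≤ 1`.
-/

open Finset Real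

section Online

variable {ι : Type*} [LinearOrder ι]

def IsOnline (f : (ι → Bool) → ι → Bool) : Prop :=
  ∀ x y i, (∀ j < i, x j = y j) → f x i = f y i

theorem IsOnline.eq_of_forall_correct_iff [WellFoundedLT ι] {f : (ι → Bool) → ι → Bool}
    (hf : IsOnline f) {x y : ι → Bool} (h : ∀ i, f x i = x i ↔ f y i = y i) : x = y := by
  funext i
  induction i using WellFoundedLT.induction with
  | ind i ih =>
    have hguess : f x i = f y i := hf x y i ih
    have hi := h i
    rw [hguess] at hi
    revert hi
    cases f y i <;> cases x i <;> cases y i <;> simp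

end Online

theorem card_filter_powerset_card_le {α : Type*} (s : Finset α) (k : ℕ) :
    #{t ∈ s.powerset | #t ≤ k} = ∑ j ∈ range (k + 1), (#s).choose j := by
  rw [card_eq_sum_card_fiberwise (f := card) (t := range (k + 1))
    (fun t ht => mem_range_succ_iff.2 (mem_filter.1 ht).2)]
  refine sum_congr rfl fun j hj => ?_
  rw [← card_powersetCard, powersetCard_eq_filter, filter_filter]
  congr 1
  exact filter_congr fun t _ => ⟨fun h => h.2, fun h => ⟨h ▸ mem_range_succ_iff.1 hj, h⟩⟩

theorem two_pow_card_le_of_isOnline {ι A : Type*} [LinearOrder ι] [Fintype ι] [Fintype A]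
    (f : A → (ι → Bool) → ι → Bool) (hf : ∀ a, IsOnline (f a)) (k : ℕ)
    (herrors : ∀ x, ∃ a, #{i | f a x i ≠ x i} ≤ k) :
    2 ^ Fintype.card ι ≤ Fintype.card A * ∑ j ∈ range (k + 1), (Fintype.card ι).choose j := by
  choose a ha using herrors
  have hinj : Set.InjOn (fun x => (a x, ({i | f (a x) x i ≠ x i} : Finset ι)))
      (univ : Finset (ι → Bool)) := by
    intro x _ y _ hxy
    obtain ⟨hax, herr⟩ := Prod.mk.inj hxy
    refine (hf (a x)).eq_of_forall_correct_iff fun i => ?_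
    have hi := (filter_inj'.1 herr) (mem_univ i)
    rw [hax] at hi ⊢
    exact not_iff_not.1 hi
  have := card_le_card_of_injOn _
    (t := (univ : Finset A) ×ˢ {t ∈ (univ : Finset ι).powerset | #t ≤ k})
    (fun x _ => mem_product.2 ⟨mem_univ _, mem_filter.2 ⟨mem_powerset.2 (subset_univ _), ha x⟩⟩)
    hinj
  rwa [card_product, card_filter_powerset_card_le, card_univ, card_univ, card_univ,
    Fintype.card_pi, prod_const, card_univ, Fintype.card_bool] at this

theorem rpow_mul_one_sub_rpow_sub_le {p x y n : ℝ} (hp0 : 0 < p) (hp : p ≤ 1 / 2) (hxy : x ≤ y) :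
    p ^ y * (1 - p) ^ (n - y) ≤ p ^ x * (1 - p) ^ (n - x) := by
  have hq : 0 < 1 - p := by linarith
  have hform : ∀ z, p ^ z * (1 - p) ^ (n - z) = (1 - p) ^ n * (p / (1 - p)) ^ z := fun z => by
    rw [div_rpow hp0.le hq.le, rpow_sub hq]
    ring
  rw [hform, hform]
  gcongr ?_ * ?_
  exact rpow_le_rpow_of_exponent_ge (div_pos hp0 hq) ((div_le_one hq).2 (by linarith)) hxy

theorem sum_range_choose_mul_le_one {p : ℝ} (hp0 : 0 < p) (hp : p ≤ 1 / 2) {n k : ℕ}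
    (hk : (k : ℝ) ≤ p * n) :
    (∑ i ∈ range (k + 1), (n.choose i : ℝ)) * (p ^ (p * n) * (1 - p) ^ ((1 - p) * n)) ≤ 1 := by
  have hq : 0 < 1 - p := by linarith
  have hkn : k ≤ n := by
    have : (k : ℝ) ≤ n := hk.trans (by nlinarith [(n.cast_nonneg : (0 : ℝ) ≤ n)])
    exact_mod_cast this
  calc (∑ i ∈ range (k + 1), (n.choose i : ℝ)) * (p ^ (p * n) * (1 - p) ^ ((1 - p) * n))
      ≤ ∑ i ∈ range (k + 1), (n.choose i : ℝ) * (p ^ i * (1 - p) ^ (n - i)) := by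
        rw [sum_mul]
        refine sum_le_sum fun i hi => ?_
        have hik : i ≤ k := mem_range_succ_iff.1 hi
        refine mul_le_mul_of_nonneg_left ?_ (Nat.cast_nonneg _)
        rw [← rpow_natCast, ← rpow_natCast, Nat.cast_sub (hik.trans hkn), sub_mul, one_mul]
        exact rpow_mul_one_sub_rpow_sub_le hp0 hp (le_trans (by exact_mod_cast hik) hk)
    _ ≤ ∑ i ∈ range (n + 1), (n.choose i : ℝ) * (p ^ i * (1 - p) ^ (n - i)) := by
        refine sum_le_sum_of_subset_of_nonneg (range_subset_range.2 (by omega)) fun i _ _ => ?_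
        have := pow_pos hq (n - i)
        positivity
    _ = (p + (1 - p)) ^ n := by
        rw [add_pow]
        exact sum_congr rfl fun i _ => by ring
    _ = 1 := by rw [add_sub_cancel, one_pow]

theorem sum_range_choose_pos (n k : ℕ) : 0 < ∑ i ∈ range (k + 1), (n.choose i : ℝ) :=
  sum_pos' (fun i _ => by positivity) ⟨0, by simp, by simp⟩

theorem logb_sum_range_choose_le {p : ℝ} (hp0 : 0 < p) (hp : p ≤ 1 / 2) {n k : ℕ}
    (hk : (k : ℝ) ≤ p * n) :
    logb 2 (∑ i ∈ range (k + 1), (n.choose i : ℝ)) ≤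
      -(p * logb 2 p + (1 - p) * logb 2 (1 - p)) * n := by
  have hq : 0 < 1 - p := by linarith
  have hV := sum_range_choose_pos n k
  have hP : 0 < p ^ (p * n) := rpow_pos_of_pos hp0 _
  have hQ : 0 < (1 - p) ^ ((1 - p) * n) := rpow_pos_of_pos hq _
  have := logb_le_logb_of_le one_lt_two (mul_pos hV (mul_pos hP hQ))
    (sum_range_choose_mul_le_one hp0 hp hk)
  rw [logb_one, logb_mul hV.ne' (mul_pos hP hQ).ne', logb_mul hP.ne' hQ.ne',
    logb_rpow_eq_mul_logb_of_pos hp0, logb_rpow_eq_mul_logb_of_pos hq] at this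
  linarith

/-- Lower bound for binary string guessing with known history.
A deterministic algorithm with `b` advice bits is modelled by a guessing
function `g` taking the advice string and the input string, where the guess for
bit `i` may only depend on the (revealed) bits before `i` (`honline`).  If for
every input string some advice string makes the algorithm guess correctly on
more than `α·m` bits (`1/2 ≤ α < 1`), then `2^b · V ≥ 2^m` where
`V = Σ_{i ≤ (1−α)m} C(m,i)` is the volume of the Hamming ball of radius
`(1−α)m`; consequently `b ≥ m − log₂ V ≥ (1 + (1−α)log₂(1−α) + α log₂ α)·m`. -/
theorem string_guessing_advice_lower_bound (m b : ℕ) (α : ℝ)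
    (hα1 : 1 / 2 ≤ α) (hα2 : α < 1)
    (g : (Fin b → Bool) → (Fin m → Bool) → Fin m → Bool)
    (honline : ∀ a x y i, (∀ j : Fin m, j < i → x j = y j) → g a x i = g a y i)
    (hcorrect : ∀ x : Fin m → Bool, ∃ a,
      α * m < ((Finset.univ.filter fun i => g a x i = x i).card : ℝ)) :
    ((2 : ℝ) ^ m ≤ (2 : ℝ) ^ b *
        (∑ i ∈ Finset.range (⌊(1 - α) * m⌋₊ + 1), (m.choose i : ℝ))) ∧
    ((m : ℝ) - Real.logb 2
        (∑ i ∈ Finset.range (⌊(1 - α) * m⌋₊ + 1), (m.choose i : ℝ)) ≤ (b : ℝ)) ∧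
    ((1 + (1 - α) * Real.logb 2 (1 - α) + α * Real.logb 2 α) * m ≤ (b : ℝ)) := by
  set k := ⌊(1 - α) * m⌋₊
  set V := ∑ i ∈ range (k + 1), (m.choose i : ℝ)
  have hk : (k : ℝ) ≤ (1 - α) * m := Nat.floor_le (mul_nonneg (by linarith) m.cast_nonneg)
  have herrors : ∀ x, ∃ a, #{i | g a x i ≠ x i} ≤ k := fun x => by
    obtain ⟨a, ha⟩ := hcorrect x
    refine ⟨a, Nat.le_floor ?_⟩
    have hsplit := card_filter_add_card_filter_not (s := univ) (fun i => g a x i = x i)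
    rw [card_univ, Fintype.card_fin] at hsplit
    have : (#{i | g a x i = x i} : ℝ) + #{i | g a x i ≠ x i} = m := by exact_mod_cast hsplit
    linarith
  have hcount : (2 : ℝ) ^ m ≤ 2 ^ b * V := by
    have := two_pow_card_le_of_isOnline g honline k herrors
    simp only [Fintype.card_fin, Fintype.card_pi, prod_const, card_univ, Fintype.card_bool] at this
    simp only [V]
    exact_mod_cast this
  have hlog : (m : ℝ) - logb 2 V ≤ b := by
    have := logb_le_logb_of_le one_lt_two (by positivity) hcount
    rw [logb_mul (by positivity) (sum_range_choose_pos m k).ne', logb_pow, logb_pow,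
      logb_self_eq_one one_lt_two] at this
    linarith
  refine ⟨hcount, hlog, ?_⟩
  have hentropy := logb_sum_range_choose_le (p := 1 - α) (by linarith) (by linarith) hk
  rw [sub_sub_cancel] at hentropy
  linarith
end

section
/- In the lower-bound construction for the 2-server problem on a path of 5 vertices with servers at vertices 2 and 4, any deterministic algorithm serving m rounds that correctly guesses the type of βm rounds incurs cost at least 4βm + 6(1−β)m = (6−2β)m, while the offline optimum pays exactly 4m; hence to achieve competitive ratio τ the algorithm must guess at least (3−2τ)m rounds correctly. -/
open Finset

theorem Finset.card_nsmul_add_card_compl_nsmul_le_sum {ι M : Type*} [Fintype ι] [DecidableEq ι]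
    [AddCommMonoid M] [PartialOrder M] [IsOrderedAddMonoid M]
    (S : Finset ι) {f : ι → M} {a b : M}
    (ha : ∀ i ∈ S, a ≤ f i) (hb : ∀ i ∉ S, b ≤ f i) :
    #S • a + #Sᶜ • b ≤ ∑ i, f i :=
  calc #S • a + #Sᶜ • b = ∑ _i ∈ S, a + ∑ _i ∈ Sᶜ, b := by simp only [sum_const]
    _ ≤ ∑ i ∈ S, f i + ∑ i ∈ Sᶜ, f i :=
      add_le_add (sum_le_sum ha) (sum_le_sum fun i hi => hb i (mem_compl.1 hi))
    _ = ∑ i, f i := sum_add_sum_compl S f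

/-- In the lower-bound construction for the 2-server problem on a path of 5
vertices: there are `m` rounds; the set `S` consists of the rounds whose type
the algorithm guesses correctly; a correctly guessed round costs (at least) `4`
and an incorrectly guessed round costs at least `6`.  If `βm` rounds are
guessed correctly, the total cost is at least `4βm + 6(1−β)m = (6−2β)m`, while
the offline optimum pays exactly `4m`; hence if the algorithm's cost is at most
`τ·4m`, then at least `(3−2τ)m` rounds are guessed correctly. -/
theorem two_server_round_cost_bound (m : ℕ) (c : Fin m → ℝ) (S : Finset (Fin m))
    (hcorrect : ∀ i ∈ S, 4 ≤ c i) (hwrong : ∀ i ∉ S, 6 ≤ c i)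
    (β τ : ℝ) (hβ : (S.card : ℝ) = β * m) :
    (4 * β * m + 6 * (1 - β) * m = (6 - 2 * β) * m) ∧
    (4 * β * m + 6 * (1 - β) * m ≤ ∑ i, c i) ∧
    ((∑ i, c i ≤ τ * (4 * m)) → (3 - 2 * τ) * m ≤ (S.card : ℝ)) := by
  have hcard : #S ≤ m := (card_le_univ S).trans_eq (Fintype.card_fin m)
  have hlow : (#S : ℝ) * 4 + (m - #S) * 6 ≤ ∑ i, c i := by
    simpa only [nsmul_eq_mul, card_compl, Fintype.card_fin, Nat.cast_sub hcard]
      using card_nsmul_add_card_compl_nsmul_le_sum S hcorrect hwrong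
  refine ⟨by ring, ?_, fun hcost => by linarith⟩
  rw [hβ] at hlow
  linarith
end
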